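/- arXiv:2505.15342 — 7 statements merged into one kernel-verified Lean document; each statement's English description precedes it below -/
import Mathlib

section
/- Under the stated assumptions on X, h and g, for every real σ ≥ 0 such that u_NO(σ) > min_{x∈X} g(x), one has σ_NC(u_NO(σ)) = σ. -/
/-!
Let `x₀` minimize `g` on the compact feasible set `{x ∈ X | h x ≤ σ}`, so that `u_NO(σ) = g x₀`.
Every point with `g x < g x₀` is infeasible, which gives `σ ≤ σ_NC(g x₀)`. If the inequality were
strict, then near `x₀` (where `h < c` for some `c` below `σ_NC(g x₀)`, by continuity) no point
would improve on `g x₀`: `x₀` would be a local, hence global, minimum of `g` on `X`, contradicting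
`u_NO(σ) > min g`.
-/

/-- `σ_NC(u)`: the infimum of `h` over feasible points `x ∈ X` with `g x < u`,
taken in `EReal` so that the infimum of the empty set is `+∞`. -/
noncomputable def sigmaNC {d : ℕ} (X : Set (Fin d → ℝ)) (h g : (Fin d → ℝ) → ℝ) (u : ℝ) :
    EReal :=
  sInf ((fun x => ((h x : ℝ) : EReal)) '' {x ∈ X | g x < u})

/-- `u_NO(σ)`: the minimum of `g` over feasible points `x ∈ X` with `h x ≤ σ`
(the minimum is attained, so it equals the infimum). -/
noncomputable def uNO {d : ℕ} (X : Set (Fin d → ℝ)) (h g : (Fin d → ℝ) → ℝ) (σ : ℝ) : ℝ :=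
  sInf (g '' {x ∈ X | h x ≤ σ})

theorem IsMinOn.lt_of_lt_of_sublevel {α : Type*} {X : Set α} {h g : α → ℝ} {σ : ℝ} {x₀ : α}
    (hmin : IsMinOn g {x ∈ X | h x ≤ σ} x₀) {x : α} (hx : x ∈ X) (hlt : g x < g x₀) : σ < h x :=
  lt_of_not_ge fun hσ => (hmin ⟨hx, hσ⟩).not_gt hlt

section

variable {α : Type*} [TopologicalSpace α] {X : Set α} {h g : α → ℝ}

theorem IsCompact.exists_isMinOn_sublevel [T2Space α] (hXc : IsCompact X)
    (hh : ContinuousOn h X) (hg : ContinuousOn g X) {σ : ℝ} (hfeas : ∃ x ∈ X, h x ≤ σ) :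
    ∃ x₀ ∈ {x ∈ X | h x ≤ σ}, IsMinOn g {x ∈ X | h x ≤ σ} x₀ := by
  have hclosed : IsClosed {x ∈ X | h x ≤ σ} :=
    hh.preimage_isClosed_of_isClosed hXc.isClosed isClosed_Iic
  exact (hXc.of_isClosed_subset hclosed fun x hx => hx.1).exists_isMinOn hfeas
    (hg.mono fun x hx => hx.1)

theorem isLocalMinOn_of_forall_lt_imp_le {x₀ : α} {c : ℝ} (hh : ContinuousWithinAt h X x₀)
    (hx₀ : h x₀ < c) (hsep : ∀ x ∈ X, g x < g x₀ → c ≤ h x) : IsLocalMinOn g X x₀ := by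
  filter_upwards [hh (Iio_mem_nhds hx₀), self_mem_nhdsWithin] with y hyc hyX
  exact le_of_not_gt fun hlt => (hsep y hyX hlt).not_gt hyc

end

theorem EReal.sInf_image_coe_eq {α : Type*} {S : Set α} {f : α → ℝ} {σ : ℝ}
    (hlow : ∀ x ∈ S, σ ≤ f x) (hgt : ∀ c : ℝ, σ < c → ∃ x ∈ S, f x < c) :
    sInf ((fun x => (f x : EReal)) '' S) = σ := by
  refine le_antisymm (EReal.le_of_forall_lt_iff_le.1 fun c hc => ?_) (le_sInf ?_)
  · obtain ⟨x, hx, hxc⟩ := hgt c (EReal.coe_lt_coe_iff.1 hc)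
    exact (sInf_le (Set.mem_image_of_mem _ hx)).trans (EReal.coe_le_coe_iff.2 hxc.le)
  · rintro _ ⟨x, hx, rfl⟩
    exact EReal.coe_le_coe_iff.2 (hlow x hx)

theorem stmt0_general {d : ℕ} (X : Set (Fin d → ℝ)) (hXc : IsCompact X)
    (h g : (Fin d → ℝ) → ℝ) (hh : ContinuousOn h X) (hg : ContinuousOn g X)
    -- (a) there exists `x̲ ∈ X` with `h x̲ ≤ 0`
    (ha : ∃ x ∈ X, h x ≤ 0)
    -- (c) every local minimum of `g` on `X` is a global minimum of `g` on `X`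
    (hcg : ∀ x ∈ X, (∃ U ∈ nhds x, ∀ y ∈ U ∩ X, g x ≤ g y) → ∀ y ∈ X, g x ≤ g y) :
    ∀ σ : ℝ, 0 ≤ σ → sInf (g '' X) < uNO X h g σ →
      sigmaNC X h g (uNO X h g σ) = (σ : EReal) := by
  intro σ hσ hu
  obtain ⟨x₀, hx₀, hmin⟩ :=
    hXc.exists_isMinOn_sublevel hh hg (ha.imp fun x hx => ⟨hx.1, hx.2.trans hσ⟩)
  have hu₀ : uNO X h g σ = g x₀ := (hmin.isGLB hx₀).csInf_eq ⟨g x₀, x₀, hx₀, rfl⟩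
  rw [hu₀] at hu ⊢
  refine EReal.sInf_image_coe_eq (fun x hx => (hmin.lt_of_lt_of_sublevel hx.1 hx.2).le)
    fun c hc => ?_
  by_contra! hsep
  have hloc : IsLocalMinOn g X x₀ := isLocalMinOn_of_forall_lt_imp_le (hh x₀ hx₀.1)
    (hx₀.2.trans_lt hc) fun x hx hlt => hsep x ⟨hx, hlt⟩
  have hglob : IsMinOn g X x₀ :=
    hcg x₀ hx₀.1 (mem_nhdsWithin_iff_exists_mem_nhds_inter.1 hloc)
  exact hu.ne ((hglob.isGLB hx₀.1).csInf_eq ⟨g x₀, x₀, hx₀.1, rfl⟩)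

theorem stmt0 {d : ℕ} (X : Set (Fin d → ℝ)) (hXne : X.Nonempty) (hXc : IsCompact X)
    (h g : (Fin d → ℝ) → ℝ) (hh : ContinuousOn h X) (hg : ContinuousOn g X)
    -- (a) there exists `x̲ ∈ X` with `h x̲ ≤ 0`
    (ha : ∃ x ∈ X, h x ≤ 0)
    -- (b) `min_{x∈X} g x < 0`
    (hb : sInf (g '' X) < 0)
    -- (c) every local minimum of `g` on `X` is a global minimum of `g` on `X`
    (hcg : ∀ x ∈ X, (∃ U ∈ nhds x, ∀ y ∈ U ∩ X, g x ≤ g y) → ∀ y ∈ X, g x ≤ g y)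
    -- (c) every local minimum of `h` on `X` is a global minimum of `h` on `X`
    (hch : ∀ x ∈ X, (∃ U ∈ nhds x, ∀ y ∈ U ∩ X, h x ≤ h y) → ∀ y ∈ X, h x ≤ h y) :
    ∀ σ : ℝ, 0 ≤ σ → sInf (g '' X) < uNO X h g σ →
      sigmaNC X h g (uNO X h g σ) = (σ : EReal) :=
  stmt0_general X hXc h g hh hg ha hcg
end

section
/- Under the stated assumptions on X, h and g, for every real u with min_{x∈X} g(x) < u ≤ u_NO(0), the quantity σ_NC(u) is a nonnegative real number and u_NO(σ_NC(u)) = u. -/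
theorem stmt1 {d : ℕ} (X : Set (Fin d → ℝ)) (hXne : X.Nonempty) (hXc : IsCompact X)
    (h g : (Fin d → ℝ) → ℝ) (hh : ContinuousOn h X) (hg : ContinuousOn g X)
    -- (a) there exists `x̲ ∈ X` with `h x̲ ≤ 0`
    (ha : ∃ x ∈ X, h x ≤ 0)
    -- (b) `min_{x∈X} g x < 0`
    (hb : sInf (g '' X) < 0)
    -- (c) every local minimum of `g` on `X` is a global minimum of `g` on `X`
    (hcg : ∀ x ∈ X, (∃ U ∈ nhds x, ∀ y ∈ U ∩ X, g x ≤ g y) → ∀ y ∈ X, g x ≤ g y)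
    -- (c) every local minimum of `h` on `X` is a global minimum of `h` on `X`
    (hch : ∀ x ∈ X, (∃ U ∈ nhds x, ∀ y ∈ U ∩ X, h x ≤ h y) → ∀ y ∈ X, h x ≤ h y) :
    ∀ u : ℝ, sInf (g '' X) < u → u ≤ uNO X h g 0 →
      ∃ σ : ℝ, 0 ≤ σ ∧ sigmaNC X h g u = (σ : EReal) ∧ uNO X h g σ = u := by
  obtain ⟨x0, hx0X, hx0⟩ := hXc.exists_isMinOn hXne hg
  obtain ⟨xm, hxmX, hxm⟩ := hXc.exists_isMinOn hXne hh
  obtain ⟨xa, hxaX, hxa0⟩ := ha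
  intro u hu1 hu2
  have hgbdd : BddBelow (g '' X) := ⟨g x0, by rintro _ ⟨y, hy, rfl⟩; exact hx0 hy⟩
  have hsInfgX : sInf (g '' X) = g x0 :=
    le_antisymm (csInf_le hgbdd ⟨x0, hx0X, rfl⟩)
      (le_csInf ⟨g x0, x0, hx0X, rfl⟩ (by rintro _ ⟨y, hy, rfl⟩; exact hx0 hy))
  rw [hsInfgX] at hu1
  set S : Set (Fin d → ℝ) := {x ∈ X | g x < u} with hSdef
  have hx0S : x0 ∈ S := ⟨hx0X, hu1⟩
  set A : Set ℝ := h '' S with hAdef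
  have hAne : A.Nonempty := ⟨h x0, x0, hx0S, rfl⟩
  have hAbdd : BddBelow A := ⟨h xm, by rintro _ ⟨y, hyS, rfl⟩; exact hxm hyS.1⟩
  set σ := sInf A with hσdef
  -- lower bound for g over any subset of X
  have glow : ∀ (P : (Fin d → ℝ) → Prop), BddBelow (g '' {x ∈ X | P x}) :=
    fun P => ⟨g x0, by rintro _ ⟨y, hyS, rfl⟩; exact hx0 hyS.1⟩
  -- σ ≥ 0
  have hσ0 : 0 ≤ σ := by
    by_contra hneg
    push_neg at hneg
    obtain ⟨a, ⟨y, hyS, rfl⟩, hlt⟩ := exists_lt_of_csInf_lt hAne hneg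
    have hmem : g y ∈ g '' {x ∈ X | h x ≤ 0} := ⟨y, ⟨hyS.1, hlt.le⟩, rfl⟩
    have : uNO X h g 0 ≤ g y := csInf_le (glow _) hmem
    exact absurd (lt_of_le_of_lt (hu2.trans this) hyS.2) (lt_irrefl u)
  -- closure of S
  have hXcl : IsClosed X := hXc.isClosed
  have hCcl : IsClosed {x ∈ X | g x ≤ u} := by
    have : {x ∈ X | g x ≤ u} = X ∩ g ⁻¹' Set.Iic u := rfl
    rw [this]
    exact hg.preimage_isClosed_of_isClosed hXcl isClosed_Iic
  have hSsub : S ⊆ {x ∈ X | g x ≤ u} := fun x hx => ⟨hx.1, hx.2.le⟩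
  have hKsub : closure S ⊆ {x ∈ X | g x ≤ u} := closure_minimal hSsub hCcl
  have hKX : closure S ⊆ X := fun x hx => (hKsub hx).1
  have hKc : IsCompact (closure S) := hXc.of_isClosed_subset isClosed_closure hKX
  obtain ⟨xs, hxsK, hxs⟩ := hKc.exists_isMinOn ⟨x0, subset_closure hx0S⟩ (hh.mono hKX)
  have hxsσ : h xs ≤ σ := le_csInf hAne (by rintro _ ⟨y, hyS, rfl⟩; exact hxs (subset_closure hyS))
  have hxsX : xs ∈ X := hKX hxsK
  have hxsg : g xs ≤ u := (hKsub hxsK).2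
  refine ⟨σ, hσ0, ?_, ?_⟩
  · -- sigmaNC = σ
    have himg : (fun x => ((h x : ℝ) : EReal)) '' S = (fun r : ℝ => (r : EReal)) '' A := by
      rw [hAdef, Set.image_image]
    have hglb : IsGLB ((fun r : ℝ => (r : EReal)) '' A) (σ : EReal) := by
      constructor
      · rintro _ ⟨a, haA, rfl⟩
        exact EReal.coe_le_coe_iff.2 (csInf_le hAbdd haA)
      · intro b hb'
        induction b using EReal.rec with
        | bot => exact bot_le
        | coe r =>
          have : r ≤ σ := le_csInf hAne fun a haA =>
            EReal.coe_le_coe_iff.1 (hb' ⟨a, haA, rfl⟩)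
          exact EReal.coe_le_coe_iff.2 this
        | top =>
          obtain ⟨a, haA⟩ := hAne
          exact absurd (hb' ⟨a, haA, rfl⟩) (by simp)
      
    rw [sigmaNC, ← hSdef, himg, hglb.sInf_eq]
  · -- uNO σ = u
    rw [uNO]
    apply le_antisymm
    · have hmem : g xs ∈ g '' {x ∈ X | h x ≤ σ} := ⟨xs, ⟨hxsX, hxsσ⟩, rfl⟩
      exact le_trans (csInf_le (glow _) hmem) hxsg
    · have hne : (g '' {x ∈ X | h x ≤ σ}).Nonempty := ⟨g xs, xs, ⟨hxsX, hxsσ⟩, rfl⟩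
      apply le_csInf hne
      rintro _ ⟨y, ⟨hyX, hyh⟩, rfl⟩
      by_contra hlt
      push_neg at hlt
      have hyS : y ∈ S := ⟨hyX, hlt⟩
      have hyσ : h y = σ := le_antisymm hyh (csInf_le hAbdd ⟨y, hyS, rfl⟩)
      -- y is a local min of h on X
      have hev : g ⁻¹' Set.Iio u ∈ nhdsWithin y X := hg y hyX (Iio_mem_nhds hlt)
      obtain ⟨U, hUopen, hyU, hUsub⟩ := mem_nhdsWithin.mp hev
      have hloc : ∀ z ∈ U ∩ X, h y ≤ h z := by
        intro z hz
        have hzS : z ∈ S := ⟨hz.2, hUsub ⟨hz.1, hz.2⟩⟩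
        rw [hyσ]
        exact csInf_le hAbdd ⟨z, hzS, rfl⟩
      have hglob := hch y hyX ⟨U, hUopen.mem_nhds hyU, hloc⟩
      have hy0 : h y ≤ 0 := (hglob xa hxaX).trans hxa0
      have : uNO X h g 0 ≤ g y := csInf_le (glow _) ⟨y, ⟨hyX, hy0⟩, rfl⟩
      exact absurd (lt_of_le_of_lt (hu2.trans this) hlt) (lt_irrefl u)
end

section
/- Under the stated assumptions on X, h and g, whenever σ ≥ 0, u > min_{x∈X} g(x), and u_NO(σ) ≤ u, one has σ_NC(u) ≤ σ; equivalently, for every ε > 0 there exists x ∈ X with g(x) < u and h(x) ≤ σ + ε. -/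
theorem stmt2 {d : ℕ} (X : Set (Fin d → ℝ)) (hXne : X.Nonempty) (hXc : IsCompact X)
    (h g : (Fin d → ℝ) → ℝ) (hh : ContinuousOn h X) (hg : ContinuousOn g X)
    (ha : ∃ x ∈ X, h x ≤ 0)
    (hb : sInf (g '' X) < 0)
    (hcg : ∀ x ∈ X, (∃ U ∈ nhds x, ∀ y ∈ U ∩ X, g x ≤ g y) → ∀ y ∈ X, g x ≤ g y)
    (hch : ∀ x ∈ X, (∃ U ∈ nhds x, ∀ y ∈ U ∩ X, h x ≤ h y) → ∀ y ∈ X, h x ≤ h y) :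
    ∀ σ : ℝ, 0 ≤ σ → ∀ u : ℝ, sInf (g '' X) < u → uNO X h g σ ≤ u →
      sigmaNC X h g u ≤ (σ : EReal) := by
  intro σ hσ u hu hle
  set K : Set (Fin d → ℝ) := {x ∈ X | h x ≤ σ} with hKdef
  have hKcl : IsClosed K := by
    have : K = X ∩ h ⁻¹' Set.Iic σ := rfl
    rw [this]
    exact hh.preimage_isClosed_of_isClosed hXc.isClosed isClosed_Iic
  have hKc : IsCompact K := hXc.of_isClosed_subset hKcl (Set.sep_subset _ _)
  obtain ⟨x0, hx0X, hx0⟩ := ha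
  have hKne : K.Nonempty := ⟨x0, hx0X, le_trans hx0 hσ⟩
  obtain ⟨z, hzK, hmin⟩ := hKc.exists_isMinOn hKne (hg.mono (Set.sep_subset _ _))
  have huNO : uNO X h g σ = g z := by
    refine IsLeast.csInf_eq ⟨⟨z, hzK, rfl⟩, ?_⟩
    rintro _ ⟨y, hy, rfl⟩
    exact hmin hy
  rw [huNO] at hle
  rcases lt_or_eq_of_le hle with hlt | heq
  · have : sigmaNC X h g u ≤ ((h z : ℝ) : EReal) :=
      sInf_le ⟨z, ⟨hzK.1, hlt⟩, rfl⟩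
    exact this.trans (EReal.coe_le_coe_iff.2 hzK.2)
  · -- g z = u > inf g, so z is not a global min, hence not a local min
    have hne : (g '' X).Nonempty := hXne.image g
    obtain ⟨_, ⟨y0, hy0X, rfl⟩, hy0lt⟩ := exists_lt_of_csInf_lt hne (heq ▸ hu)
    have hnotloc : ¬ ∃ U ∈ nhds z, ∀ y ∈ U ∩ X, g z ≤ g y := fun hloc =>
      absurd (hcg z hzK.1 hloc y0 hy0X) (not_le.2 hy0lt)
    push_neg at hnotloc
    have H : ∀ ε : ℝ, 0 < ε → sigmaNC X h g u ≤ ((σ + ε : ℝ) : EReal) := by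
      intro ε hε
      have hcw : ContinuousWithinAt h X z := hh z hzK.1
      have hmem : h ⁻¹' Set.Iio (σ + ε) ∈ nhdsWithin z X :=
        hcw (Iio_mem_nhds (by linarith [hzK.2]))
      rw [mem_nhdsWithin] at hmem
      obtain ⟨U, hUopen, hzU, hUsub⟩ := hmem
      obtain ⟨y, hyU, hylt⟩ := hnotloc U (hUopen.mem_nhds hzU)
      have hhy : h y < σ + ε := hUsub hyU
      have : sigmaNC X h g u ≤ ((h y : ℝ) : EReal) :=
        sInf_le ⟨y, ⟨hyU.2, heq ▸ hylt⟩, rfl⟩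
      exact this.trans (EReal.coe_le_coe_iff.2 hhy.le)
    by_contra hcon
    push_neg at hcon
    obtain ⟨r, hr1, hr2⟩ := EReal.exists_between_coe_real hcon
    have hεpos : 0 < r - σ := by
      have := EReal.coe_lt_coe_iff.1 hr1
      linarith
    have := H (r - σ) hεpos
    rw [show σ + (r - σ) = r by ring] at this
    exact absurd this (not_le.2 hr2)
end

section
/- Under the stated assumptions on X, h and g, the function σ ↦ u_NO(σ) is continuous on the interval [0, ∞). -/
theorem stmt4 {d : ℕ} (X : Set (Fin d → ℝ)) (hXne : X.Nonempty) (hXc : IsCompact X)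
    (h g : (Fin d → ℝ) → ℝ) (hh : ContinuousOn h X) (hg : ContinuousOn g X)
    (ha : ∃ x ∈ X, h x ≤ 0)
    (hb : sInf (g '' X) < 0)
    (hcg : ∀ x ∈ X, (∃ U ∈ nhds x, ∀ y ∈ U ∩ X, g x ≤ g y) → ∀ y ∈ X, g x ≤ g y)
    (hch : ∀ x ∈ X, (∃ U ∈ nhds x, ∀ y ∈ U ∩ X, h x ≤ h y) → ∀ y ∈ X, h x ≤ h y) :
    ContinuousOn (uNO X h g) (Set.Ici (0 : ℝ)) := by
  have hXclosed : IsClosed X := hXc.isClosed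
  -- sublevel sets of continuous functions on X are compact
  have hcomp : ∀ (F : (Fin d → ℝ) → ℝ), ContinuousOn F X → ∀ c : ℝ,
      IsCompact {x ∈ X | F x ≤ c} := by
    intro F hF c
    have heq : {x ∈ X | F x ≤ c} = X ∩ F ⁻¹' Set.Iic c := rfl
    rw [heq]
    exact hXc.of_isClosed_subset
      (hF.preimage_isClosed_of_isClosed hXclosed isClosed_Iic) Set.inter_subset_left
  have hSsub : ∀ c : ℝ, {x ∈ X | h x ≤ c} ⊆ X := fun c => Set.sep_subset _ _
  have hSne : ∀ c : ℝ, 0 ≤ c → ({x ∈ X | h x ≤ c} : Set _).Nonempty := by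
    obtain ⟨x0, hx0X, hx0⟩ := ha
    exact fun c hc => ⟨x0, hx0X, hx0.trans hc⟩
  have hbdd : ∀ c : ℝ, BddBelow (g '' {x ∈ X | h x ≤ c}) := fun c =>
    ((hcomp h hh c).image_of_continuousOn (hg.mono (hSsub c))).bddBelow
  -- uNO c ≤ g x for x feasible at level c
  have hle : ∀ c : ℝ, ∀ x ∈ {x ∈ X | h x ≤ c}, uNO X h g c ≤ g x := fun c x hx =>
    csInf_le (hbdd c) ⟨x, hx, rfl⟩
  -- lower bounds transfer to uNO
  have hgeb : ∀ c : ℝ, 0 ≤ c → ∀ b : ℝ, (∀ x ∈ {x ∈ X | h x ≤ c}, b ≤ g x) →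
      b ≤ uNO X h g c := by
    intro c hc b hb
    refine le_csInf ((hSne c hc).image g) ?_
    rintro r ⟨y, hy, rfl⟩
    exact hb y hy
  -- attainment of the minimum
  have hmin : ∀ c : ℝ, 0 ≤ c → ∃ x ∈ {x ∈ X | h x ≤ c}, uNO X h g c = g x := by
    intro c hc
    obtain ⟨x, hxS, hxmin⟩ := (hcomp h hh c).exists_isMinOn (hSne c hc) (hg.mono (hSsub c))
    refine ⟨x, hxS, ?_⟩
    have hleast : IsLeast (g '' {x ∈ X | h x ≤ c}) (g x) := by
      constructor
      · exact ⟨x, hxS, rfl⟩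
      · rintro r ⟨y, hy, rfl⟩
        exact hxmin hy
    exact hleast.csInf_eq
  intro σ hσ
  have hσ0 : (0:ℝ) ≤ σ := hσ
  rw [Metric.continuousWithinAt_iff]
  intro ε hε
  -- right claim: uNO doesn't drop much just to the right of σ
  have right : ∃ δ > (0:ℝ), ∀ σ' ≥ σ, σ' < σ + δ → uNO X h g σ - ε/2 ≤ uNO X h g σ' := by
    by_cases hK : ({x ∈ X | g x ≤ uNO X h g σ - ε/2} : Set _).Nonempty
    · obtain ⟨x0, hx0K, hx0min⟩ :=
        (hcomp g hg (uNO X h g σ - ε/2)).exists_isMinOn hK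
          (hh.mono (Set.sep_subset _ _))
      have hσlt : σ < h x0 := by
        by_contra hcon
        push_neg at hcon
        have := hle σ x0 ⟨hx0K.1, hcon⟩
        have := hx0K.2
        linarith
      refine ⟨h x0 - σ, by linarith, fun σ' h1 h2 => ?_⟩
      refine hgeb σ' (hσ0.trans h1) _ (fun x hx => ?_)
      by_contra hcon
      push_neg at hcon
      have hxK : x ∈ {x ∈ X | g x ≤ uNO X h g σ - ε/2} := ⟨hx.1, hcon.le⟩
      have h3 : h x0 ≤ h x := hx0min hxK
      have h4 : h x ≤ σ' := hx.2
      linarith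
    · refine ⟨1, one_pos, fun σ' h1 _ => ?_⟩
      refine hgeb σ' (hσ0.trans h1) _ (fun x hx => ?_)
      by_contra hcon
      push_neg at hcon
      exact hK ⟨x, hx.1, hcon.le⟩
  -- left claim: uNO doesn't rise much just to the left of σ
  have left : ∃ δ > (0:ℝ), ∀ σ' ≥ (0:ℝ), σ' < σ → σ - δ < σ' →
      uNO X h g σ' ≤ uNO X h g σ + ε/2 := by
    rcases eq_or_lt_of_le hσ0 with hσe | hσpos
    · exact ⟨1, one_pos, fun σ' h0 hlt _ => absurd hlt (not_lt.mpr (hσe ▸ h0))⟩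
    · obtain ⟨xs, hxsS, hfs⟩ := hmin σ hσ0
      have hy : ∃ y ∈ X, h y < σ ∧ g y ≤ uNO X h g σ + ε/2 := by
        rcases lt_or_eq_of_le hxsS.2 with hlt | heq
        · exact ⟨xs, hxsS.1, hlt, by rw [hfs]; linarith⟩
        · -- h xs = σ > 0, so xs is not a global min of h, hence not a local min
          obtain ⟨xb, hxbX, hxb⟩ := ha
          have hnotglob : ¬ ∀ y ∈ X, h xs ≤ h y := by
            intro hcon
            have := hcon xb hxbX
            rw [heq] at this
            linarith
          have hnotloc := mt (hch xs hxsS.1) hnotglob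
          push_neg at hnotloc
          have hgc := hg xs hxsS.1
          rw [Metric.continuousWithinAt_iff] at hgc
          obtain ⟨δ', hδ'pos, hδ'⟩ := hgc (ε/2) (by linarith)
          obtain ⟨y, hyU, hyh⟩ := hnotloc (Metric.ball xs δ') (Metric.ball_mem_nhds xs hδ'pos)
          have hgy : dist (g y) (g xs) < ε/2 := hδ' hyU.2 (Metric.mem_ball.mp hyU.1)
          rw [Real.dist_eq, abs_sub_lt_iff] at hgy
          refine ⟨y, hyU.2, by rw [← heq]; exact hyh, ?_⟩
          rw [hfs]
          linarith [hgy.1]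
      obtain ⟨y, hyX, hyσ, hyg⟩ := hy
      refine ⟨σ - h y, by linarith, fun σ' _ _ h3 => ?_⟩
      exact le_trans (hle σ' y ⟨hyX, by linarith⟩) hyg
  obtain ⟨δ1, hδ1, hR⟩ := right
  obtain ⟨δ2, hδ2, hL⟩ := left
  refine ⟨min δ1 δ2, lt_min hδ1 hδ2, fun σ' hσ' hdist => ?_⟩
  have hσ'0 : (0:ℝ) ≤ σ' := hσ'
  rw [Real.dist_eq, abs_sub_lt_iff] at hdist
  rw [Real.dist_eq, abs_sub_lt_iff]
  rcases le_or_gt σ σ' with hc | hc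
  · have h1 := hR σ' hc (by have := min_le_left δ1 δ2; linarith [hdist.1])
    have h2 : uNO X h g σ' ≤ uNO X h g σ := by
      obtain ⟨x, hxS, hfeq⟩ := hmin σ hσ0
      rw [hfeq]
      exact hle σ' x ⟨hxS.1, hxS.2.trans hc⟩
    constructor <;> linarith
  · have h1 := hL σ' hσ'0 hc (by have := min_le_right δ1 δ2; linarith [hdist.2])
    have h2 : uNO X h g σ ≤ uNO X h g σ' := by
      obtain ⟨x, hxS, hfeq⟩ := hmin σ' hσ'0
      rw [hfeq]
      exact hle σ x ⟨hxS.1, hxS.2.trans hc.le⟩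
    constructor <;> linarith
end

section
/- Let x^{(0)} ∈ Q and define the projected-gradient iterates x^{(k+1)} := T_L(x^{(k)}) for k ≥ 0. If f satisfies the gradient-mapping domination condition on Q with constant ω > 0, then for every integer k ≥ 1: f(x^{(k)}) − f* ≤ max{ 4L/(ω k), (√2/2)^k · (f(x^{(0)}) − f*) }. -/
/-!
A projected gradient step decreases `f` by at least `(L/2)‖z - T z‖²` (descent lemma plus the
variational inequality of the projection), and `‖G z‖ = L‖z - T z‖`, so domination turns this into
`δₖ₊₁ + (ω/L) δₖ₊₁² ≤ δₖ` for `δₖ = f(x⁽ᵏ⁾) - f*`. At each step either `δ` halves, or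
`δₖ₊₁ > δₖ/2` and then `1/δₖ₊₁ ≥ 1/δₖ + ω/(2L)`. One of the two kinds of step occurs at least
`k/2` times among the first `k`, giving `δₖ ≤ (√2/2)ᵏ δ₀` or `δₖ ≤ 4L/(ωk)`.
-/

open InnerProductSpace Set

theorem le_add_deriv_add_half_of_deriv_sub_le {g g' : ℝ → ℝ} (hg : ∀ t, HasDerivAt g (g' t) t)
    {M : ℝ} (hM : ∀ t ∈ Icc (0 : ℝ) 1, g' t - g' 0 ≤ M * t) :
    g 1 ≤ g 0 + g' 0 + M / 2 := by
  have hB : ∀ t, HasDerivAt (fun t => g 0 + t * g' 0 + M / 2 * t ^ 2) (g' 0 + M * t) t := by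
    intro t
    have := (((hasDerivAt_id t).mul_const (g' 0)).const_add (g 0)).add
      ((hasDerivAt_pow 2 t).const_mul (M / 2))
    exact this.congr_deriv (by simp; ring)
  have := image_le_of_deriv_right_le_deriv_boundary (a := 0) (b := 1)
    (fun t _ => (hg t).continuousAt.continuousWithinAt)
    (fun t _ => (hg t).hasDerivWithinAt) (by simp)
    (fun t _ => (hB t).continuousAt.continuousWithinAt)
    (fun t _ => (hB t).hasDerivWithinAt)
    (fun t ht => by linarith [hM t (Ico_subset_Icc_self ht)])
    (right_mem_Icc.mpr zero_le_one)
  simpa using this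

section

variable {E : Type*} [NormedAddCommGroup E] [InnerProductSpace ℝ E]

theorem le_add_inner_add_sq_of_lipschitz_gradient [CompleteSpace E] {f : E → ℝ} {f' : E → E}
    (hf : ∀ x, HasGradientAt f (f' x) x) {L : ℝ}
    (hLip : ∀ x y, ‖f' x - f' y‖ ≤ L * ‖x - y‖) (x y : E) :
    f y ≤ f x + ⟪f' x, y - x⟫_ℝ + L / 2 * ‖y - x‖ ^ 2 := by
  have hline : ∀ t : ℝ, HasDerivAt (fun t : ℝ => f (x + t • (y - x)))
      ⟪f' (x + t • (y - x)), y - x⟫_ℝ t := by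
    intro t
    have hc : HasDerivAt (fun t : ℝ => x + t • (y - x)) (y - x) t := by
      simpa using ((hasDerivAt_id t).smul_const (y - x)).const_add x
    simpa [Function.comp_def] using
      (hasGradientAt_iff_hasFDerivAt.mp (hf _)).comp_hasDerivAt t hc
  have := le_add_deriv_add_half_of_deriv_sub_le hline (M := L * ‖y - x‖ ^ 2) fun t ht => by
    rw [zero_smul, add_zero, ← inner_sub_left]
    calc ⟪f' (x + t • (y - x)) - f' x, y - x⟫_ℝ
        ≤ ‖f' (x + t • (y - x)) - f' x‖ * ‖y - x‖ := real_inner_le_norm _ _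
      _ ≤ L * ‖t • (y - x)‖ * ‖y - x‖ := by
        gcongr
        simpa using hLip (x + t • (y - x)) x
      _ = L * ‖y - x‖ ^ 2 * t := by
        rw [norm_smul, Real.norm_of_nonneg ht.1]; ring
  simpa [mul_div_right_comm] using this

theorem inner_sub_le_zero_of_forall_norm_sub_le {Q : Set E} (hQ : Convex ℝ Q) {u p : E}
    (hp : p ∈ Q) (hmin : ∀ y ∈ Q, ‖p - u‖ ≤ ‖y - u‖) {y : E} (hy : y ∈ Q) :
    ⟪u - p, y - p⟫_ℝ ≤ 0 := by
  have : Nonempty Q := ⟨⟨p, hp⟩⟩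
  refine (norm_eq_iInf_iff_real_inner_le_zero hQ hp).mp (le_antisymm ?_ ?_) y hy
  · exact le_ciInf fun w => by simpa only [norm_sub_rev u] using hmin w w.2
  · exact ciInf_le ⟨0, forall_mem_range.2 fun _ => norm_nonneg _⟩ (⟨p, hp⟩ : Q)

theorem le_sub_half_sq_of_projected_gradient_step [CompleteSpace E] {Q : Set E} (hQ : Convex ℝ Q)
    {f : E → ℝ} {f' : E → E} (hf : ∀ x, HasGradientAt f (f' x) x) {L : ℝ} (hL : 0 < L)
    (hLip : ∀ x y, ‖f' x - f' y‖ ≤ L * ‖x - y‖) {z p : E} (hz : z ∈ Q) (hp : p ∈ Q)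
    (hmin : ∀ y ∈ Q, ‖p - (z - (1 / L) • f' z)‖ ≤ ‖y - (z - (1 / L) • f' z)‖) :
    f p ≤ f z - L / 2 * ‖z - p‖ ^ 2 := by
  have hgrad : L * ‖z - p‖ ^ 2 ≤ ⟪f' z, z - p⟫_ℝ := by
    have hvi := inner_sub_le_zero_of_forall_norm_sub_le hQ hp hmin hz
    rw [show z - (1 / L) • f' z - p = (z - p) - (1 / L) • f' z by abel, inner_sub_left,
      real_inner_smul_left, real_inner_self_eq_norm_sq] at hvi
    have := mul_le_mul_of_nonneg_left hvi hL.le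
    field_simp at this
    linarith
  have hdes := le_add_inner_add_sq_of_lipschitz_gradient hf hLip z p
  rw [← neg_sub z p, inner_neg_right, norm_neg] at hdes
  linarith

end

theorem add_div_mul_sq_le_of_le_sub_of_sqrt_mul_le {L ω a b s : ℝ} (hL : 0 < L) (hω : 0 ≤ ω)
    (hb : 0 ≤ b) (hdec : b ≤ a - L / 2 * s ^ 2) (hdom : √(2 * ω) * b ≤ L * s) :
    b + ω / L * b ^ 2 ≤ a := by
  have hsq : 2 * ω * b ^ 2 ≤ (L * s) ^ 2 := by
    have := pow_le_pow_left₀ (by positivity) hdom 2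
    rwa [mul_pow, Real.sq_sqrt (by positivity)] at this
  have : ω / L * b ^ 2 ≤ L / 2 * s ^ 2 := by
    rw [div_mul_eq_mul_div, div_le_iff₀ hL]
    nlinarith
  linarith

theorem one_div_add_half_le_one_div {c d d' : ℝ} (hc : 0 ≤ c) (hd' : d / 2 < d')
    (hrec : d' + c * d' ^ 2 ≤ d) : 1 / d + c / 2 ≤ 1 / d' := by
  have hd'pos : 0 < d' := by nlinarith [mul_nonneg hc (sq_nonneg d')]
  have hdpos : 0 < d := by nlinarith [mul_nonneg hc (sq_nonneg d')]
  rw [div_add_div _ _ hdpos.ne' two_ne_zero, div_le_div_iff₀ (by positivity) hd'pos]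
  nlinarith [mul_le_mul_of_nonneg_left hd'.le (mul_nonneg hc hd'pos.le)]

section

variable {c : ℝ} {δ : ℕ → ℝ} (hrec : ∀ k, δ (k + 1) + c * δ (k + 1) ^ 2 ≤ δ k)
include hrec

theorem exists_halving_and_inverse_growth_counts (hc : 0 ≤ c) (j : ℕ) :
    ∃ a b : ℕ, a + b = j ∧ δ j ≤ (1 / 2) ^ a * δ 0 ∧ c * b * δ j ≤ 2 := by
  induction j with
  | zero => exact ⟨0, 0, rfl, by simp, by simp⟩
  | succ j ih =>
    obtain ⟨a, b, hab, hhalf, hgrowth⟩ := ih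
    have hmono : δ (j + 1) ≤ δ j := by nlinarith [hrec j, mul_nonneg hc (sq_nonneg (δ (j + 1)))]
    by_cases hcase : δ (j + 1) ≤ δ j / 2
    · refine ⟨a + 1, b, by omega, ?_, ?_⟩
      · rw [pow_succ]; linarith
      · nlinarith [mul_le_mul_of_nonneg_left hmono (by positivity : 0 ≤ c * b)]
    · push Not at hcase
      have hpos : 0 < δ (j + 1) := by nlinarith [mul_nonneg hc (sq_nonneg (δ (j + 1)))]
      have hjpos : 0 < δ j := hpos.trans_le hmono
      refine ⟨a, b + 1, by omega, hmono.trans hhalf, ?_⟩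
      have hb : c * b / 2 ≤ 1 / δ j := by rw [le_div_iff₀ hjpos]; linarith
      have hinv := one_div_add_half_le_one_div hc hcase (hrec j)
      have hb' : c * (b + 1) / 2 ≤ 1 / δ (j + 1) := by linarith
      rw [le_div_iff₀ hpos] at hb'
      push_cast
      linarith

theorem le_max_of_add_mul_sq_le (hδ : ∀ k, 0 ≤ δ k) (hc : 0 < c) (k : ℕ) :
    δ k ≤ max (4 / (c * k)) ((√2 / 2) ^ k * δ 0) := by
  obtain ⟨a, b, hab, hhalf, hgrowth⟩ := exists_halving_and_inverse_growth_counts hrec hc.le k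
  by_cases hk : k ≤ 2 * a
  · refine le_max_of_le_right ?_
    have hsq : (√2 / 2) ^ 2 = 1 / 2 := by rw [div_pow, Real.sq_sqrt zero_le_two]; norm_num
    have hle : √2 / 2 ≤ 1 := by rw [div_le_one two_pos, Real.sqrt_le_left zero_le_two]; norm_num
    calc δ k ≤ (1 / 2) ^ a * δ 0 := hhalf
      _ = (√2 / 2) ^ (2 * a) * δ 0 := by rw [pow_mul, hsq]
      _ ≤ (√2 / 2) ^ k * δ 0 := by
        gcongr ?_ * _
        · exact hδ 0
        · exact pow_le_pow_of_le_one (by positivity) hle hk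
  · refine le_max_of_le_left ?_
    have hkb : (k : ℝ) ≤ 2 * b := by exact_mod_cast (by omega : k ≤ 2 * b)
    have hkpos : (0 : ℝ) < k := by exact_mod_cast (by omega : 0 < k)
    rw [le_div_iff₀ (by positivity)]
    nlinarith [mul_le_mul_of_nonneg_left hkb (mul_nonneg hc.le (hδ k))]

end

theorem stmt5_general (n : ℕ) (Q : Set (EuclideanSpace ℝ (Fin n)))
    (hQconv : Convex ℝ Q)
    (L : ℝ) (hL : 0 < L)
    (f : EuclideanSpace ℝ (Fin n) → ℝ)
    (f' : EuclideanSpace ℝ (Fin n) → EuclideanSpace ℝ (Fin n))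
    -- `f` is differentiable with gradient `f'`
    (hf : ∀ x, HasGradientAt f (f' x) x)
    -- the gradient is `L`-Lipschitz
    (hLip : ∀ x y, ‖f' x - f' y‖ ≤ L * ‖x - y‖)
    -- `f* = min_{x ∈ Q} f x`
    (fstar : ℝ) (hfstar : IsLeast (f '' Q) fstar)
    -- `proj` is the (unique) Euclidean projection onto `Q`
    (proj : EuclideanSpace ℝ (Fin n) → EuclideanSpace ℝ (Fin n))
    (hproj : ∀ x, proj x ∈ Q ∧ ∀ y ∈ Q, ‖proj x - x‖ ≤ ‖y - x‖)
    -- `T_L(x) = proj_Q (x − (1/L) ∇f(x))` and `G_L(x) = L (x − T_L(x))`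
    (T : EuclideanSpace ℝ (Fin n) → EuclideanSpace ℝ (Fin n))
    (hT : ∀ x, T x = proj (x - (1 / L) • f' x))
    (G : EuclideanSpace ℝ (Fin n) → EuclideanSpace ℝ (Fin n))
    (hG : ∀ x, G x = L • (x - T x))
    -- gradient-mapping domination with constant `ω > 0`
    (ω : ℝ) (hω : 0 < ω)
    (hdom : ∀ x ∈ Q, Real.sqrt (2 * ω) * (f (T x) - fstar) ≤ ‖G x‖)
    -- the projected-gradient iterates
    (x : ℕ → EuclideanSpace ℝ (Fin n)) (hx0 : x 0 ∈ Q)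
    (hxk : ∀ k : ℕ, x (k + 1) = T (x k)) :
    ∀ k : ℕ, 1 ≤ k →
      f (x k) - fstar ≤
        max (4 * L / (ω * k)) ((Real.sqrt 2 / 2) ^ k * (f (x 0) - fstar)) := by
  intro k _
  have hTQ (z) : T z ∈ Q := hT z ▸ (hproj _).1
  have hxQ (k) : x k ∈ Q := Nat.rec hx0 (fun k _ => hxk k ▸ hTQ _) k
  have hlow (z) (hz : z ∈ Q) : fstar ≤ f z := hfstar.2 ⟨z, hz, rfl⟩
  have hstep (z) (hz : z ∈ Q) :
      f (T z) - fstar + ω / L * (f (T z) - fstar) ^ 2 ≤ f z - fstar := by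
    have hdec : f (T z) ≤ f z - L / 2 * ‖z - T z‖ ^ 2 :=
      le_sub_half_sq_of_projected_gradient_step hQconv hf hL hLip hz (hTQ z)
        (by rw [hT]; exact (hproj _).2)
    refine add_div_mul_sq_le_of_le_sub_of_sqrt_mul_le hL hω.le (sub_nonneg.2 (hlow _ (hTQ z)))
      (s := ‖z - T z‖) (by linarith) ?_
    simpa [hG, norm_smul, abs_of_pos hL] using hdom z hz
  have := le_max_of_add_mul_sq_le (fun k => hxk k ▸ hstep _ (hxQ k))
    (fun k => sub_nonneg.2 (hlow _ (hxQ k))) (div_pos hω hL) k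
  rwa [div_mul_eq_mul_div, div_div_eq_mul_div] at this

/-- Projected gradient descent under the gradient-mapping domination condition:
`f(x⁽ᵏ⁾) − f* ≤ max{4L/(ωk), (√2/2)ᵏ (f(x⁽⁰⁾) − f*)}` for all `k ≥ 1`. -/
theorem stmt5 (n : ℕ) (Q : Set (EuclideanSpace ℝ (Fin n)))
    (hQne : Q.Nonempty) (hQc : IsCompact Q) (hQconv : Convex ℝ Q)
    (L : ℝ) (hL : 0 < L)
    (f : EuclideanSpace ℝ (Fin n) → ℝ)
    (f' : EuclideanSpace ℝ (Fin n) → EuclideanSpace ℝ (Fin n))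
    -- `f` is differentiable with gradient `f'`
    (hf : ∀ x, HasGradientAt f (f' x) x)
    -- the gradient is `L`-Lipschitz
    (hLip : ∀ x y, ‖f' x - f' y‖ ≤ L * ‖x - y‖)
    -- `f* = min_{x ∈ Q} f x`
    (fstar : ℝ) (hfstar : IsLeast (f '' Q) fstar)
    -- `proj` is the (unique) Euclidean projection onto `Q`
    (proj : EuclideanSpace ℝ (Fin n) → EuclideanSpace ℝ (Fin n))
    (hproj : ∀ x, proj x ∈ Q ∧ ∀ y ∈ Q, ‖proj x - x‖ ≤ ‖y - x‖)
    -- `T_L(x) = proj_Q (x − (1/L) ∇f(x))` and `G_L(x) = L (x − T_L(x))`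
    (T : EuclideanSpace ℝ (Fin n) → EuclideanSpace ℝ (Fin n))
    (hT : ∀ x, T x = proj (x - (1 / L) • f' x))
    (G : EuclideanSpace ℝ (Fin n) → EuclideanSpace ℝ (Fin n))
    (hG : ∀ x, G x = L • (x - T x))
    -- gradient-mapping domination with constant `ω > 0`
    (ω : ℝ) (hω : 0 < ω)
    (hdom : ∀ x ∈ Q, Real.sqrt (2 * ω) * (f (T x) - fstar) ≤ ‖G x‖)
    -- the projected-gradient iterates
    (x : ℕ → EuclideanSpace ℝ (Fin n)) (hx0 : x 0 ∈ Q)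
    (hxk : ∀ k : ℕ, x (k + 1) = T (x k)) :
    ∀ k : ℕ, 1 ≤ k →
      f (x k) - fstar ≤
        max (4 * L / (ω * k)) ((Real.sqrt 2 / 2) ^ k * (f (x 0) - fstar)) :=
  stmt5_general n Q hQconv L hL f f' hf hLip fstar hfstar proj hproj T hT G hG ω hω hdom x hx0 hxk
end

section
/- For every (s,a) ∈ S × A and every integer t ≥ |W|, the sampling counts of the tracking rule satisfy t·ω_{sa} − |W| ≤ N_{sa}(t) ≤ t·ω_{sa} + 1. -/
/-!
Over `W` the counts `N_x(t)` add up to `t` and the weights `ω_x` add up to `1`, so the arm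
minimising `N_x(t) / ω_x` satisfies `N_b(t) ≤ t ω_b`: the tracking rule only ever samples an
arm lying below its target. By induction from `N_x(|W|) = 1` this gives `N_x(t) ≤ t ω_x + 1`
for every arm. Summing the nonnegative slacks `t ω_x + 1 - N_x(t)`, which total `|W|`, bounds
each of them by `|W|`; this is the lower bound.
-/

open Finset

section WeightedSums

variable {ι : Type*} {s : Finset ι} {f w : ι → ℝ}

lemma le_sum_mul_of_forall_div_le {b : ι} (hw : ∀ x ∈ s, 0 < w x) (hw1 : ∑ x ∈ s, w x = 1)
    (hb : b ∈ s) (hmin : ∀ x ∈ s, f b / w b ≤ f x / w x) :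
    f b ≤ (∑ x ∈ s, f x) * w b := by
  have hdiv : f b / w b ≤ ∑ x ∈ s, f x :=
    calc f b / w b = ∑ x ∈ s, f b / w b * w x := by rw [← mul_sum, hw1, mul_one]
      _ ≤ ∑ x ∈ s, f x :=
        sum_le_sum fun x hx => (le_div_iff₀ (hw x hx)).mp (hmin x hx)
  exact (div_le_iff₀ (hw b hb)).mp hdiv

lemma mul_add_one_sub_card_le_of_forall_le {t : ℝ} {a : ι} (hf : ∑ x ∈ s, f x = t)
    (hw1 : ∑ x ∈ s, w x = 1) (hle : ∀ x ∈ s, f x ≤ t * w x + 1) (ha : a ∈ s) :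
    t * w a + 1 - #s ≤ f a := by
  have hslack : ∑ x ∈ s, (t * w x + 1 - f x) = #s := by
    rw [sum_sub_distrib, sum_add_distrib, ← mul_sum, hw1, hf, sum_const, nsmul_one]
    ring
  have := single_le_sum (fun x hx => sub_nonneg.mpr (hle x hx)) ha
  linarith

end WeightedSums

namespace Tracking

variable {ι : Type*} [DecidableEq ι]

def sampleCount (seq : ℕ → ι) (x : ι) (t : ℕ) : ℕ :=
  ((Icc 1 t).filter fun u => seq u = x).card

variable {seq : ℕ → ι}

lemma sampleCount_succ (x : ι) (t : ℕ) :
    sampleCount seq x (t + 1) = sampleCount seq x t + if seq (t + 1) = x then 1 else 0 := by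
  have hIcc : Icc 1 (t + 1) = insert (t + 1) (Icc 1 t) := by
    ext u; simp only [mem_Icc, mem_insert]; omega
  have hnotMem : t + 1 ∉ (Icc 1 t).filter fun u => seq u = x := by simp
  unfold sampleCount
  rw [hIcc, filter_insert]
  split_ifs
  · exact card_insert_of_notMem hnotMem
  · rfl

lemma sum_sampleCount {s : Finset ι} {t : ℕ} (hmaps : ∀ u ∈ Icc 1 t, seq u ∈ s) :
    ∑ x ∈ s, sampleCount seq x t = t := by
  unfold sampleCount
  rw [← card_eq_sum_card_fiberwise hmaps, Nat.card_Icc, Nat.add_sub_cancel]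

lemma sampleCount_eq_zero_of_notMem {s : Finset ι} {x : ι} {t : ℕ}
    (hmaps : ∀ u ∈ Icc 1 t, seq u ∈ s) (hx : x ∉ s) : sampleCount seq x t = 0 :=
  card_eq_zero.mpr <| filter_eq_empty_iff.mpr fun u hu hux => hx (hux ▸ hmaps u hu)

lemma sampleCount_le_one_of_injOn {t : ℕ} (hinj : Set.InjOn seq (Icc 1 t)) (x : ι) :
    sampleCount seq x t ≤ 1 :=
  card_le_one.mpr fun u hu v hv => by
    rw [mem_filter] at hu hv
    exact hinj hu.1 hv.1 (hu.2.trans hv.2.symm)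

lemma sampleCount_le_mul_add_one {W : Finset ι} {ω : ι → ℝ}
    (hω : ∀ x ∈ W, 0 < ω x) (hω1 : ∑ x ∈ W, ω x = 1) (hmaps : ∀ u, 1 ≤ u → seq u ∈ W)
    (hinj : Set.InjOn seq (Icc 1 #W))
    (htrack : ∀ t, #W < t → ∀ x ∈ W,
      (sampleCount seq (seq t) (t - 1) : ℝ) / ω (seq t) ≤ sampleCount seq x (t - 1) / ω x)
    {t : ℕ} (ht : #W ≤ t) {x : ι} (hx : x ∈ W) :
    (sampleCount seq x t : ℝ) ≤ t * ω x + 1 := by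
  induction t, ht using Nat.le_induction generalizing x with
  | base =>
    have hle : (sampleCount seq x #W : ℝ) ≤ 1 := by
      exact_mod_cast sampleCount_le_one_of_injOn hinj x
    nlinarith [hω x hx]
  | succ t ht ih =>
    set b := seq (t + 1)
    have hb : b ∈ W := hmaps (t + 1) le_add_self
    have hsum : ∑ y ∈ W, (sampleCount seq y t : ℝ) = t := by
      exact_mod_cast sum_sampleCount fun u hu => hmaps u (mem_Icc.mp hu).1
    have hmin := htrack (t + 1) (by omega)
    simp only [Nat.add_sub_cancel] at hmin
    have hunder : (sampleCount seq b t : ℝ) ≤ t * ω b := by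
      simpa [hsum] using
        le_sum_mul_of_forall_div_le (f := fun y => (sampleCount seq y t : ℝ)) hω hω1 hb hmin
    rw [sampleCount_succ]
    push_cast
    split_ifs with hbx
    · subst hbx
      nlinarith [hω b hb]
    · nlinarith [ih hx, hω x hx]

end Tracking

open Tracking

theorem stmt6_general {S A : Type*} [Fintype S] [Fintype A] [DecidableEq S] [DecidableEq A]
    (ω : S × A → ℝ) (hω0 : ∀ sa, 0 ≤ ω sa) (hω1 : ∑ sa : S × A, ω sa = 1)
    -- `W = {(s,a) : ω_{sa} > 0}`, assumed nonempty
    (W : Finset (S × A)) (hW : ∀ sa : S × A, sa ∈ W ↔ 0 < ω sa)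
    -- the samples `A_1, A_2, …` and the counts `N_{sa}(t)`
    (seq : ℕ → S × A)
    (N : S × A → ℕ → ℕ)
    (hN : ∀ sa t, N sa t = ((Finset.Icc 1 t).filter (fun u => seq u = sa)).card)
    -- (i) the first `|W|` samples enumerate `W`, each element sampled exactly once
    (hinit1 : ∀ u ∈ Finset.Icc 1 W.card, seq u ∈ W)
    (hinit2 : ∀ u ∈ Finset.Icc 1 W.card, ∀ v ∈ Finset.Icc 1 W.card, seq u = seq v → u = v)
    -- (ii) for `t > |W|`, `A_t ∈ W` minimizes `N_{s'a'}(t−1)/ω_{s'a'}` over `W`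
    (htrack : ∀ t : ℕ, W.card < t → seq t ∈ W ∧
      ∀ sa ∈ W, (N (seq t) (t - 1) : ℝ) / ω (seq t) ≤ (N sa (t - 1) : ℝ) / ω sa) :
    ∀ sa : S × A, ∀ t : ℕ, W.card ≤ t →
      (t : ℝ) * ω sa - W.card ≤ (N sa t : ℝ) ∧ (N sa t : ℝ) ≤ t * ω sa + 1 := by
  obtain rfl : N = sampleCount seq := funext fun sa => funext (hN sa)
  intro sa t ht
  have hω_eq_zero : ∀ x ∉ W, ω x = 0 := fun x hx =>
    le_antisymm (not_lt.mp (hx ∘ (hW x).mpr)) (hω0 x)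
  have hmaps : ∀ u, 1 ≤ u → seq u ∈ W := fun u hu =>
    if hle : u ≤ #W then hinit1 u (mem_Icc.mpr ⟨hu, hle⟩) else (htrack u (by omega)).1
  have hmaps_t : ∀ u ∈ Icc 1 t, seq u ∈ W := fun u hu => hmaps u (mem_Icc.mp hu).1
  have hωW : ∑ x ∈ W, ω x = 1 := by
    rw [← hω1]
    exact sum_subset (subset_univ W) fun x _ hx => hω_eq_zero x hx
  have hupper : ∀ x ∈ W, (sampleCount seq x t : ℝ) ≤ t * ω x + 1 := fun x hx =>
    sampleCount_le_mul_add_one (fun y hy => (hW y).mp hy) hωW hmaps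
      (fun u hu v hv => hinit2 u hu v hv) (fun t ht => (htrack t ht).2) ht hx
  by_cases hsa : sa ∈ W
  · have hsum : ∑ x ∈ W, (sampleCount seq x t : ℝ) = t := by
      exact_mod_cast sum_sampleCount hmaps_t
    have := mul_add_one_sub_card_le_of_forall_le hsum hωW hupper hsa
    exact ⟨by linarith, hupper sa hsa⟩
  · simp [sampleCount_eq_zero_of_notMem hmaps_t hsa, hω_eq_zero sa hsa]

/-- Tracking lemma: under the tracking sampling rule for a target allocation `ω`,
the sampling counts satisfy `t ω_{sa} − |W| ≤ N_{sa}(t) ≤ t ω_{sa} + 1` for `t ≥ |W|`. -/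
theorem stmt6 {S A : Type*} [Fintype S] [Fintype A] [DecidableEq S] [DecidableEq A]
    [Nonempty S] [Nonempty A]
    (ω : S × A → ℝ) (hω0 : ∀ sa, 0 ≤ ω sa) (hω1 : ∑ sa : S × A, ω sa = 1)
    -- `W = {(s,a) : ω_{sa} > 0}`, assumed nonempty
    (W : Finset (S × A)) (hW : ∀ sa : S × A, sa ∈ W ↔ 0 < ω sa) (hWne : W.Nonempty)
    -- the samples `A_1, A_2, …` and the counts `N_{sa}(t)`
    (seq : ℕ → S × A)
    (N : S × A → ℕ → ℕ)
    (hN : ∀ sa t, N sa t = ((Finset.Icc 1 t).filter (fun u => seq u = sa)).card)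
    -- (i) the first `|W|` samples enumerate `W`, each element sampled exactly once
    (hinit1 : ∀ u ∈ Finset.Icc 1 W.card, seq u ∈ W)
    (hinit2 : ∀ u ∈ Finset.Icc 1 W.card, ∀ v ∈ Finset.Icc 1 W.card, seq u = seq v → u = v)
    -- (ii) for `t > |W|`, `A_t ∈ W` minimizes `N_{s'a'}(t−1)/ω_{s'a'}` over `W`
    (htrack : ∀ t : ℕ, W.card < t → seq t ∈ W ∧
      ∀ sa ∈ W, (N (seq t) (t - 1) : ℝ) / ω (seq t) ≤ (N sa (t - 1) : ℝ) / ω sa) :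
    ∀ sa : S × A, ∀ t : ℕ, W.card ≤ t →
      (t : ℝ) * ω sa - W.card ≤ (N sa t : ℝ) ∧ (N sa t : ℝ) ≤ t * ω sa + 1 :=
  stmt6_general ω hω0 hω1 W hW seq N hN hinit1 hinit2 htrack
end

section
/- (Simulation / performance-difference lemma.) For any two transition kernels p, p̃ and any (s,a) ∈ S × A: Q^π_p(s,a) − Q^π_{p̃}(s,a) = (γ/(1−γ)) · Σ_{(s',a') ∈ S×A} d^π_{p,s,a}(s',a') · Σ_{s''∈S} V^π_{p̃}(s'') · (p(s''|s',a') − p̃(s''|s',a')). -/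
open Finset

noncomputable section

/-- `p` is a transition kernel: `p(·|s,a)` is a probability vector on `S`. -/
def IsKernel {S A : Type*} [Fintype S] (p : S → A → S → ℝ) : Prop :=
  (∀ s a s', 0 ≤ p s a s') ∧ ∀ s a, ∑ s' : S, p s a s' = 1

/-- `π` is a policy: `π(·|s)` is a probability vector on `A`. -/
def IsPolicy {S A : Type*} [Fintype A] (π : S → A → ℝ) : Prop :=
  (∀ s a, 0 ≤ π s a) ∧ ∀ s, ∑ a : A, π s a = 1

/-- The row-stochastic matrix `P_{p,π}(s,s') = Σ_a π(a|s) p(s'|s,a)`. -/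
def Pmat {S A : Type*} [Fintype A] (π : S → A → ℝ) (p : S → A → S → ℝ) :
    Matrix S S ℝ :=
  fun s s' => ∑ a : A, π s a * p s a s'

/-- `r^π(s) = Σ_a π(a|s) r(s,a)`. -/
def rpi {S A : Type*} [Fintype A] (π : S → A → ℝ) (r : S → A → ℝ) (s : S) : ℝ :=
  ∑ a : A, π s a * r s a

/-- The value function `V^π_p(s) = Σ_t γ^t ((P_{p,π})^t r^π)(s)`. -/
def Vval {S A : Type*} [Fintype S] [DecidableEq S] [Fintype A]
    (γ : ℝ) (π : S → A → ℝ) (r : S → A → ℝ) (p : S → A → S → ℝ) (s : S) : ℝ :=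
  ∑' t : ℕ, γ ^ t * ((Pmat π p ^ t).mulVec (fun s' => rpi π r s')) s

/-- The Q-function `Q^π_p(s,a) = r(s,a) + γ Σ_{s'} p(s'|s,a) V^π_p(s')`. -/
def Qval {S A : Type*} [Fintype S] [DecidableEq S] [Fintype A]
    (γ : ℝ) (π : S → A → ℝ) (r : S → A → ℝ) (p : S → A → S → ℝ) (s : S) (a : A) : ℝ :=
  r s a + γ * ∑ s' : S, p s a s' * Vval γ π r p s'

/-- The matrix `M_{p,π}((s,a),(s',a')) = p(s'|s,a) π(a'|s')` on `S × A`. -/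
def Mmat {S A : Type*} (π : S → A → ℝ) (p : S → A → S → ℝ) :
    Matrix (S × A) (S × A) ℝ :=
  fun sa s'a' => p sa.1 sa.2 s'a'.1 * π s'a'.1 s'a'.2

/-- The discounted visitation distribution
`d^π_{p,s,a}(s',a') = (1−γ) Σ_t γ^t ((M_{p,π})^t)_{(s,a),(s',a')}`. -/
def dvis {S A : Type*} [Fintype S] [DecidableEq S] [Fintype A] [DecidableEq A]
    (γ : ℝ) (π : S → A → ℝ) (p : S → A → S → ℝ) (x y : S × A) : ℝ :=
  (1 - γ) * ∑' t : ℕ, γ ^ t * (Mmat π p ^ t) x y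

/-- `d^π_{p,ρ}(s,a) = Σ_{(s₀,a₀)} ρ_{s₀} π(a₀|s₀) d^π_{p,s₀,a₀}(s,a)`. -/
def drho {S A : Type*} [Fintype S] [DecidableEq S] [Fintype A] [DecidableEq A]
    (γ : ℝ) (π : S → A → ℝ) (p : S → A → S → ℝ) (ρ : S → ℝ) (y : S × A) : ℝ :=
  ∑ x : S × A, ρ x.1 * π x.1 x.2 * dvis γ π p x y

/-- `KL_{sa}(p,q) = Σ_{s'} p(s'|s,a) log(p(s'|s,a)/q(s'|s,a))`
(with the convention `0 log 0 = 0`, automatic since `Real.log 0 = 0`). -/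
def KLsa {S A : Type*} [Fintype S] (p q : S → A → S → ℝ) (s : S) (a : A) : ℝ :=
  ∑ s' : S, p s a s' * Real.log (p s a s' / q s a s')

end

/-! Write `D = Q^π_p − Q^π_p̃` and `g(s,a) = Σ_{s''} V^π_p̃(s'') (p − p̃)(s''|s,a)`. Expanding both
Q-functions one step, and using that `V^π_q` is the `π`-average of `Q^π_q`, gives the
Bellman-type equation `D = γ g + γ M_{p,π} D`. As `M_{p,π}` is row stochastic, `‖γ M_{p,π}‖_∞ < 1`,
so `1 − γ M_{p,π}` is inverted by the Neumann series `Σ_t γ^t M_{p,π}^t`, whose `(s,a)`-row is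
`d^π_{p,s,a} / (1 − γ)`. -/

namespace Matrix

variable {n : Type*} [Fintype n] [DecidableEq n] {M : Matrix n n ℝ} {γ : ℝ}

section LinftyOpNorm

attribute [local instance] Matrix.linftyOpNormedRing Matrix.linftyOpNormedAlgebra

lemma linfty_opNorm_le_one_of_mem_rowStochastic (hM : M ∈ rowStochastic ℝ n) : ‖M‖ ≤ 1 := by
  rw [linfty_opNorm_def, NNReal.coe_le_one]
  refine Finset.sup_le fun i _ => le_of_eq (NNReal.coe_injective ?_)
  push_cast
  simp_rw [Real.norm_of_nonneg (nonneg_of_mem_rowStochastic hM)]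
  exact sum_row_of_mem_rowStochastic hM i

lemma summable_geometric_smul_of_mem_rowStochastic (hM : M ∈ rowStochastic ℝ n)
    (hγ : |γ| < 1) : Summable fun t : ℕ => (γ • M) ^ t := by
  refine summable_geometric_of_norm_lt_one ?_
  rw [norm_smul, Real.norm_eq_abs]
  calc |γ| * ‖M‖ ≤ |γ| * 1 := by gcongr; exact linfty_opNorm_le_one_of_mem_rowStochastic hM
    _ < 1 := by simpa

end LinftyOpNorm

lemma tsum_geometric_smul_mul_one_sub (hM : M ∈ rowStochastic ℝ n) (hγ : |γ| < 1) :
    (∑' t : ℕ, (γ • M) ^ t) * (1 - γ • M) = 1 :=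
  (summable_geometric_smul_of_mem_rowStochastic hM hγ).tsum_pow_mul_one_sub

lemma one_sub_mul_tsum_geometric_smul (hM : M ∈ rowStochastic ℝ n) (hγ : |γ| < 1) :
    (1 - γ • M) * ∑' t : ℕ, (γ • M) ^ t = 1 :=
  (summable_geometric_smul_of_mem_rowStochastic hM hγ).one_sub_mul_tsum_pow

lemma eq_add_smul_mulVec_iff_eq_tsum_mulVec (hM : M ∈ rowStochastic ℝ n) (hγ : |γ| < 1)
    {x u : n → ℝ} :
    x = u + γ • (M *ᵥ x) ↔ x = (∑' t : ℕ, (γ • M) ^ t) *ᵥ u := by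
  have hx : x = u + γ • (M *ᵥ x) ↔ (1 - γ • M) *ᵥ x = u := by
    rw [sub_mulVec, one_mulVec, smul_mulVec, sub_eq_iff_eq_add', add_comm]
  rw [hx]
  constructor
  · rintro rfl
    rw [mulVec_mulVec, tsum_geometric_smul_mul_one_sub hM hγ, one_mulVec]
  · rintro rfl
    rw [mulVec_mulVec, one_sub_mul_tsum_geometric_smul hM hγ, one_mulVec]

lemma hasSum_geometric_smul_apply (hM : M ∈ rowStochastic ℝ n) (hγ : |γ| < 1) (i j : n) :
    HasSum (fun t : ℕ => γ ^ t * (M ^ t) i j) ((∑' t : ℕ, (γ • M) ^ t) i j) := by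
  have hs := (summable_geometric_smul_of_mem_rowStochastic hM hγ).hasSum
  simpa [smul_pow] using Pi.hasSum.1 (Pi.hasSum.1 hs i) j

lemma hasSum_geometric_smul_mulVec_apply (hM : M ∈ rowStochastic ℝ n) (hγ : |γ| < 1)
    (v : n → ℝ) (i : n) :
    HasSum (fun t : ℕ => γ ^ t * (M ^ t *ᵥ v) i) (((∑' t : ℕ, (γ • M) ^ t) *ᵥ v) i) := by
  simp only [mulVec, dotProduct, Finset.mul_sum, ← mul_assoc]
  exact hasSum_sum fun j _ => (hasSum_geometric_smul_apply hM hγ i j).mul_right (v j)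

end Matrix

section MDP

open Matrix

variable {S A : Type*} [Fintype S] [Fintype A] {γ : ℝ} {r : S → A → ℝ} {π : S → A → ℝ}
  {p : S → A → S → ℝ}

lemma Pmat_mem_rowStochastic [DecidableEq S] (hπ : IsPolicy π) (hp : IsKernel p) :
    Pmat π p ∈ rowStochastic ℝ S := by
  refine mem_rowStochastic_iff_sum.2
    ⟨fun s s' => sum_nonneg fun a _ => mul_nonneg (hπ.1 s a) (hp.1 s a s'), fun s => ?_⟩
  simp only [Pmat]
  rw [Finset.sum_comm]
  simp [← Finset.mul_sum, hp.2, hπ.2]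

lemma Mmat_mem_rowStochastic [DecidableEq S] [DecidableEq A] (hπ : IsPolicy π)
    (hp : IsKernel p) : Mmat π p ∈ rowStochastic ℝ (S × A) := by
  refine mem_rowStochastic_iff_sum.2 ⟨fun x y => mul_nonneg (hp.1 _ _ _) (hπ.1 _ _), fun x => ?_⟩
  simp [Mmat, Fintype.sum_prod_type, ← Finset.mul_sum, hπ.2, hp.2]

lemma Mmat_mulVec_apply (f : S × A → ℝ) (s : S) (a : A) :
    (Mmat π p *ᵥ f) (s, a) = ∑ s', p s a s' * ∑ a', π s' a' * f (s', a') := by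
  simp only [mulVec, dotProduct, Mmat, Fintype.sum_prod_type, Finset.mul_sum, mul_assoc]

variable [DecidableEq S]

lemma Vval_eq_tsum_mulVec (hγ : |γ| < 1) (hπ : IsPolicy π) (hp : IsKernel p) :
    Vval γ π r p = (∑' t : ℕ, (γ • Pmat π p) ^ t) *ᵥ rpi π r :=
  funext fun s =>
    (hasSum_geometric_smul_mulVec_apply (Pmat_mem_rowStochastic hπ hp) hγ _ s).tsum_eq

lemma Vval_eq_rpi_add (hγ : |γ| < 1) (hπ : IsPolicy π) (hp : IsKernel p) :
    Vval γ π r p = rpi π r + γ • (Pmat π p *ᵥ Vval γ π r p) :=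
  (eq_add_smul_mulVec_iff_eq_tsum_mulVec (Pmat_mem_rowStochastic hπ hp) hγ).2
    (Vval_eq_tsum_mulVec hγ hπ hp)

lemma sum_mul_Qval (hγ : |γ| < 1) (hπ : IsPolicy π) (hp : IsKernel p) (s : S) :
    ∑ a, π s a * Qval γ π r p s a = Vval γ π r p s := by
  conv_rhs => rw [Vval_eq_rpi_add hγ hπ hp]
  simp only [Qval, rpi, Pmat, Pi.add_apply, Pi.smul_apply, smul_eq_mul, mulVec, dotProduct,
    mul_add, Finset.sum_add_distrib, Finset.mul_sum, Finset.sum_mul]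
  rw [Finset.sum_comm (s := univ) (t := univ)]
  congr 1
  exact Finset.sum_congr rfl fun a _ => Finset.sum_congr rfl fun s' _ => by ring

lemma Qval_sub_Qval_eq_add {ptil : S → A → S → ℝ} (hγ : |γ| < 1) (hπ : IsPolicy π)
    (hp : IsKernel p) (hptil : IsKernel ptil) :
    (fun x : S × A => Qval γ π r p x.1 x.2 - Qval γ π r ptil x.1 x.2) =
      γ • (fun x : S × A => ∑ s', Vval γ π r ptil s' * (p x.1 x.2 s' - ptil x.1 x.2 s')) +
      γ • (Mmat π p *ᵥ fun x : S × A => Qval γ π r p x.1 x.2 - Qval γ π r ptil x.1 x.2) := by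
  funext ⟨s, a⟩
  have hV : ∀ s', ∑ a', π s' a' * (Qval γ π r p s' a' - Qval γ π r ptil s' a') =
      Vval γ π r p s' - Vval γ π r ptil s' := fun s' => by
    simp only [mul_sub, Finset.sum_sub_distrib, sum_mul_Qval hγ hπ hp, sum_mul_Qval hγ hπ hptil]
  simp only [Pi.add_apply, Pi.smul_apply, smul_eq_mul, Mmat_mulVec_apply, hV]
  simp only [Qval, add_sub_add_left_eq_sub, ← mul_sub, ← mul_add, ← Finset.sum_sub_distrib,
    ← Finset.sum_add_distrib]
  congr 1
  exact Finset.sum_congr rfl fun s' _ => by ring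

variable [DecidableEq A]

lemma dvis_eq_mul_tsum_apply (hγ : |γ| < 1) (hπ : IsPolicy π) (hp : IsKernel p)
    (x y : S × A) :
    dvis γ π p x y = (1 - γ) * (∑' t : ℕ, (γ • Mmat π p) ^ t) x y := by
  rw [dvis, (hasSum_geometric_smul_apply (Mmat_mem_rowStochastic hπ hp) hγ x y).tsum_eq]

end MDP

/-- Simulation / performance-difference lemma. -/
theorem stmt7 {S A : Type*} [Fintype S] [DecidableEq S] [Fintype A] [DecidableEq A]
    (γ : ℝ) (hγ : γ ∈ Set.Ioo (0 : ℝ) 1) (r : S → A → ℝ)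
    (π : S → A → ℝ) (hπ : IsPolicy π)
    (p ptil : S → A → S → ℝ) (hp : IsKernel p) (hptil : IsKernel ptil) :
    ∀ s a, Qval γ π r p s a - Qval γ π r ptil s a =
      γ / (1 - γ) * ∑ x : S × A, dvis γ π p (s, a) x *
        ∑ s'' : S, Vval γ π r ptil s'' * (p x.1 x.2 s'' - ptil x.1 x.2 s'') := by
  intro s a
  have hγ' : |γ| < 1 := abs_lt.2 ⟨by linarith [hγ.1], hγ.2⟩
  have h1γ : 1 - γ ≠ 0 := sub_ne_zero.2 hγ.2.ne'
  have hD := congrFun ((Matrix.eq_add_smul_mulVec_iff_eq_tsum_mulVec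
    (Mmat_mem_rowStochastic hπ hp) hγ').1 (Qval_sub_Qval_eq_add (r := r) hγ' hπ hp hptil)) (s, a)
  rw [hD, Matrix.mulVec_smul, Pi.smul_apply, smul_eq_mul, Matrix.mulVec, dotProduct,
    Finset.mul_sum, Finset.mul_sum]
  refine Finset.sum_congr rfl fun x _ => ?_
  rw [dvis_eq_mul_tsum_apply hγ' hπ hp]
  field_simp
end
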